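/- arXiv:1510.05612 — 4 statements merged into one kernel-verified Lean document; each statement's English description precedes it below -/
import Mathlib

section
/- For the transitive percolation growth process with parameter p ∈ (0,1), the probability of generating a given labelled partial order Q on {x₁,…,x_m} (with x₁ < x₂ < ⋯ < x_m a linear extension, generated in this order) equals p^{c(Q)} (1−p)^{i(Q)}, where c(Q) is the number of covering pairs of Q and i(Q) is the number of incomparable pairs of Q. -/
/-- The partial order generated by transitive percolation from the graph `g`:
the transitive closure of the directed edges (from lower to higher index). -/
def percRel (m : ℕ) (g : {q : Fin m × Fin m // q.1 < q.2} → Bool) (i j : Fin m) : Prop :=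
  Relation.TransGen (fun i j : Fin m => ∃ h : i < j, g ⟨(i, j), h⟩ = true) i j

/-- The probability weight of a graph: each pair i < j is an edge with probability p,
independently. -/
def percWeight (m : ℕ) (p : ℝ) (g : {q : Fin m × Fin m // q.1 < q.2} → Bool) : ℝ :=
  ∏ q : {q : Fin m × Fin m // q.1 < q.2}, (if g q then p else 1 - p)

section Aux

variable {m : ℕ} {lt : Fin m → Fin m → Prop}

open Classical in
/-- The key combinatorial equivalence: `g` generates `lt` iff `g` contains all covering
edges and no edges between incomparable pairs. -/
theorem perc_gen_iff
    (hirr : ∀ i, ¬ lt i i) (htrans : ∀ i j k, lt i j → lt j k → lt i k)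
    (hlinext : ∀ i j, lt i j → i < j)
    (g : {q : Fin m × Fin m // q.1 < q.2} → Bool) :
    (∀ i j : Fin m, percRel m g i j ↔ lt i j) ↔
      (∀ q : {q : Fin m × Fin m // q.1 < q.2},
        ((lt q.1.1 q.1.2 ∧ ¬ ∃ z, lt q.1.1 z ∧ lt z q.1.2) → g q = true) ∧
        (¬ lt q.1.1 q.1.2 → g q = false)) := by
  constructor
  · intro H q
    obtain ⟨⟨i, j⟩, hij⟩ := q
    constructor
    · rintro ⟨hlt, hnoz⟩
      have hh := (H i j).2 hlt
      cases hh with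
      | single e => exact e.2
      | tail hchain hedge =>
        exfalso
        rename_i z
        exact hnoz ⟨z, (H i z).1 hchain, (H z j).1 (Relation.TransGen.single hedge)⟩
    · intro hn
      by_contra hg
      have hg' : g ⟨(i, j), hij⟩ = true := by
        cases h : g ⟨(i, j), hij⟩ <;> simp_all
      exact hn ((H i j).1 (Relation.TransGen.single ⟨hij, hg'⟩))
  · intro H i j
    constructor
    · intro h
      induction h with
      | single e => 
        obtain ⟨hij, hg⟩ := e
        by_contra hn
        have := (H ⟨(i, _), hij⟩).2 hn
        simp_all
      | tail _ e ih =>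
        obtain ⟨hij, hg⟩ := e
        by_contra hn
        -- edge from b to c implies lt b c
        rename_i b c hbc
        have hltbc : lt b c := by
          by_contra hn2
          have := (H ⟨(b, c), hij⟩).2 hn2
          simp_all
        exact hn (htrans _ _ _ ih hltbc)
    · intro h
      -- strong induction on j - i
      have key : ∀ n (i j : Fin m), j.val - i.val ≤ n → lt i j → percRel m g i j := by
        intro n
        induction n with
        | zero =>
          intro i j hle hlt
          have := hlinext i j hlt
          omega
        | succ n ih =>
          intro i j hle hlt
          have hij : i < j := hlinext i j hlt
          by_cases hz : ∃ z, lt i z ∧ lt z j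
          · obtain ⟨z, h1, h2⟩ := hz
            have hiz : i < z := hlinext i z h1
            have hzj : z < j := hlinext z j h2
            exact (ih i z (by omega) h1).trans (ih z j (by omega) h2)
          · exact Relation.TransGen.single ⟨hij, (H ⟨(i, j), hij⟩).1 ⟨hlt, hz⟩⟩
      exact key (j.val - i.val) i j le_rfl h

end Aux

set_option maxHeartbeats 1000000 in
open Classical in
/-- The probability that transitive percolation with parameter p generates a given labelled
partial order Q (with the index order a linear extension) equals p^{c(Q)} (1-p)^{i(Q)},
where c(Q) is the number of covering pairs and i(Q) the number of incomparable pairs. -/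
theorem transitive_percolation_probability (m : ℕ) (p : ℝ) (hp : p ∈ Set.Ioo (0:ℝ) 1)
    (lt : Fin m → Fin m → Prop)
    (hirr : ∀ i, ¬ lt i i) (htrans : ∀ i j k, lt i j → lt j k → lt i k)
    (hlinext : ∀ i j, lt i j → i < j) :
    ∑ g ∈ Finset.univ.filter
        (fun g : {q : Fin m × Fin m // q.1 < q.2} → Bool =>
          ∀ i j : Fin m, percRel m g i j ↔ lt i j),
      percWeight m p g
    = p ^ (Finset.univ.filter
            (fun q : Fin m × Fin m => lt q.1 q.2 ∧ ¬ ∃ z, lt q.1 z ∧ lt z q.2)).card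
      * (1 - p) ^ (Finset.univ.filter
            (fun q : Fin m × Fin m => q.1 < q.2 ∧ ¬ lt q.1 q.2 ∧ ¬ lt q.2 q.1)).card := by
  set S := {q : Fin m × Fin m // q.1 < q.2}
  set Cov : S → Prop := fun q => lt q.1.1 q.1.2 ∧ ¬ ∃ z, lt q.1.1 z ∧ lt z q.1.2 with hCov
  set Inc : S → Prop := fun q => ¬ lt q.1.1 q.1.2 with hInc
  -- the per-coordinate weight function, zeroed out at forbidden values
  set F : S → Bool → ℝ := fun q b =>
    if (Cov q → b = true) ∧ (Inc q → b = false) then (if b then p else 1 - p) else 0 with hF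
  have hCovInc : ∀ q : S, Cov q → ¬ Inc q := fun q hc hi => hi hc.1
  -- step 1: LHS = ∑ over all g of ∏ F
  have step1 : ∑ g ∈ Finset.univ.filter
        (fun g : S → Bool => ∀ i j : Fin m, percRel m g i j ↔ lt i j),
      percWeight m p g = ∑ g : S → Bool, ∏ q : S, F q (g q) := by
    rw [Finset.sum_filter]
    refine Finset.sum_congr rfl fun g _ => ?_
    by_cases hg : ∀ i j : Fin m, percRel m g i j ↔ lt i j
    · rw [if_pos hg]
      have hok := (perc_gen_iff hirr htrans hlinext g).1 hg
      unfold percWeight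
      refine Finset.prod_congr rfl fun q _ => ?_
      have h1 : (Cov q → g q = true) ∧ (Inc q → g q = false) := hok q
      simp only [hF]
      rw [if_pos h1]
    · rw [if_neg hg]
      have hok : ¬ ∀ q : S, (Cov q → g q = true) ∧ (Inc q → g q = false) := by
        intro h; exact hg ((perc_gen_iff hirr htrans hlinext g).2 h)
      push_neg at hok
      obtain ⟨q, hq⟩ := hok
      refine (Finset.prod_eq_zero (Finset.mem_univ q) ?_).symm
      simp only [hF]
      rw [if_neg]
      tauto
  rw [step1]
  -- step 2: exchange sum and product
  have step2 : ∑ g : S → Bool, ∏ q : S, F q (g q) = ∏ q : S, ∑ b : Bool, F q b := by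
    rw [← Finset.sum_prod_piFinset Finset.univ F]
    rw [Fintype.piFinset_univ]
  rw [step2]
  -- step 3: compute each factor
  have step3 : ∀ q : S, ∑ b : Bool, F q b =
      (if Cov q then p else 1) * (if Inc q then 1 - p else 1) := by
    intro q
    have e1 : F q true = if Inc q then 0 else p := by
      by_cases hi : Inc q
      · simp [hF, hi]
      · simp [hF, hi]
    have e2 : F q false = if Cov q then 0 else 1 - p := by
      by_cases hc : Cov q
      · simp [hF, hc]
      · simp [hF, hc]
    rw [Fintype.sum_bool, e1, e2]
    split_ifs with ha hb hb
    · exact absurd ‹Inc q› (hCovInc q ‹Cov q›)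
    · ring
    · ring
    · ring
  rw [Finset.prod_congr rfl fun q _ => step3 q]
  rw [Finset.prod_mul_distrib]
  have h1 : ∏ q : S, (if Cov q then p else 1) = p ^ (Finset.univ.filter Cov).card := by
    rw [Finset.prod_ite, Finset.prod_const, Finset.prod_const, one_pow, mul_one]
  have h2 : ∏ q : S, (if Inc q then 1 - p else 1)
      = (1 - p) ^ (Finset.univ.filter Inc).card := by
    rw [Finset.prod_ite, Finset.prod_const, Finset.prod_const, one_pow, mul_one]
  rw [h1, h2]
  congr 1
  · congr 1
    refine Finset.card_bij (fun q _ => q.val) ?_ ?_ ?_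
    · intro q hq
      simp only [Finset.mem_filter, Finset.mem_univ, true_and, hCov] at hq ⊢
      exact hq
    · intro a ha b hb h
      exact Subtype.ext h
    · intro q hq
      simp only [Finset.mem_filter, Finset.mem_univ, true_and] at hq
      exact ⟨⟨q, hlinext _ _ hq.1⟩,
        by simp only [Finset.mem_filter, Finset.mem_univ, true_and, hCov]; exact hq, rfl⟩
  · congr 1
    refine Finset.card_bij (fun q _ => q.val) ?_ ?_ ?_
    · intro q hq
      simp only [Finset.mem_filter, Finset.mem_univ, true_and, hInc] at hq ⊢
      refine ⟨q.2, hq, fun h => ?_⟩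
      exact absurd (hlinext _ _ h) (not_lt.2 (le_of_lt q.2))
    · intro a ha b hb h
      exact Subtype.ext h
    · intro q hq
      simp only [Finset.mem_filter, Finset.mem_univ, true_and] at hq
      exact ⟨⟨q, hq.1⟩,
        by simp only [Finset.mem_filter, Finset.mem_univ, true_and, hInc]; exact hq.2.1, rfl⟩
end

section
/- A finite poset is a semiorder (admits a unit-interval representation) if and only if it contains no induced subposet isomorphic to H = 2+2 (two disjoint 2-element chains) or L = 3+1 (a 3-element chain plus an incomparable element). -/
/-- x and y are incomparable in the partial order. -/
def incomp {X : Type*} [PartialOrder X] (x y : X) : Prop := ¬ x ≤ y ∧ ¬ y ≤ x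

namespace ScottSuppes
variable {X : Type*} [PartialOrder X]

variable {X : Type*} [PartialOrder X]

def trle (x y : X) : Prop := (∀ z, z < x → z < y) ∧ (∀ z, y < z → x < z)

lemma trle_refl (x : X) : trle x x := ⟨fun _ h => h, fun _ h => h⟩

lemma trle_trans {x y z : X} (h1 : trle x y) (h2 : trle y z) : trle x z :=
  ⟨fun w hw => h2.1 w (h1.1 w hw), fun w hw => h1.2 w (h2.2 w hw)⟩

lemma lt_imp_trle {x y : X} (h : x < y) : trle x y :=
  ⟨fun z hz => hz.trans h, fun z hz => h.trans hz⟩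

lemma exists_trle_max (tot : ∀ x y : X, trle x y ∨ trle y x) (s : Finset X) :
    ∀ _ : s.Nonempty, ∃ m ∈ s, ∀ x ∈ s, trle x m := by
  classical
  induction s using Finset.induction_on with
  | empty => intro h; exact absurd rfl h.ne_empty
  | @insert a s ha ih =>
      intro _
      rcases s.eq_empty_or_nonempty with rfl | hs
      · exact ⟨a, Finset.mem_insert_self a _, by
          intro x hx
          rcases Finset.mem_insert.mp hx with rfl | hx
          · exact trle_refl x
          · exact absurd hx (Finset.notMem_empty x)⟩
      · obtain ⟨m, hm, hmax⟩ := ih hs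
        rcases tot a m with h | h
        · refine ⟨m, Finset.mem_insert_of_mem hm, ?_⟩
          intro x hx
          rcases Finset.mem_insert.mp hx with rfl | hx
          · exact h
          · exact hmax x hx
        · refine ⟨a, Finset.mem_insert_self a s, ?_⟩
          intro x hx
          rcases Finset.mem_insert.mp hx with rfl | hx
          · exact trle_refl x
          · exact trle_trans (hmax x hx) h

lemma key (tot : ∀ x y : X, trle x y ∨ trle y x) (s : Finset X) :
    ∃ f : X → ℝ,
      (∀ x ∈ s, ∀ y ∈ s, x < y → f x + 1 < f y) ∧
      (∀ x ∈ s, ∀ y ∈ s, trle x y → ¬ trle y x → incomp x y → f x < f y ∧ f y < f x + 1) ∧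
      (∀ x ∈ s, ∀ y ∈ s, trle x y → trle y x → f x = f y) := by
  classical
  induction s using Finset.strongInduction with
  | _ s ih =>
  rcases s.eq_empty_or_nonempty with rfl | hs
  · exact ⟨fun _ => 0, by simp, by simp, by simp⟩
  obtain ⟨m, hm, hmax⟩ := exists_trle_max tot s hs
  set t := s.erase m with ht_def
  obtain ⟨f, hP1, hP2, hP3⟩ := ih t (Finset.erase_ssubset hm)
  have hmem : ∀ x ∈ s, m = x ∨ x ∈ t := by
    intro x hx
    rcases eq_or_ne x m with rfl | hne
    · exact Or.inl rfl
    · exact Or.inr (Finset.mem_erase.mpr ⟨hne, hx⟩)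
  have ht_sub : t ⊆ s := Finset.erase_subset m s
  have hnotlt : ∀ z ∈ s, ¬ m < z := by
    intro z hz h
    exact lt_irrefl z ((hmax z hz).2 z h)
  by_cases hA : ∃ y ∈ t, trle m y
  · -- m is trace-equivalent to some y already placed
    obtain ⟨y, hy, hmy⟩ := hA
    have hym : trle y m := hmax y (ht_sub hy)
    refine ⟨Function.update f m (f y), ?_, ?_, ?_⟩
    · intro x hx z hz hlt
      rcases hmem x hx with rfl | hx'
      · exact absurd hlt (hnotlt z hz)
      rcases hmem z hz with rfl | hz'
      · have hxm : x ≠ m := (Finset.mem_erase.mp hx').1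
        have hxy : x < m := hlt
        rw [Function.update_self, Function.update_of_ne hxm]
        exact hP1 x hx' y hy (hmy.1 x hxy)
      · have hxm : x ≠ m := (Finset.mem_erase.mp hx').1
        have hzm : z ≠ m := (Finset.mem_erase.mp hz').1
        rw [Function.update_of_ne hxm, Function.update_of_ne hzm]
        exact hP1 x hx' z hz' hlt
    · intro x hx z hz h1 h2 hinc
      rcases hmem x hx with rfl | hx'
      · exact absurd (hmax z hz) h2
      rcases hmem z hz with rfl | hz'
      · -- z = m, x in t, x strictly below trace of m
        have hxm : x ≠ m := (Finset.mem_erase.mp hx').1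
        have hixy : incomp x y := by
          constructor
          · intro hle
            rcases hle.lt_or_eq with hlt | he
            · exact hinc.1 (hym.1 x hlt).le
            · exact h2 (by rw [he]; exact hmy)
          · intro hle
            rcases hle.lt_or_eq with hlt | he
            · exact hnotlt x (ht_sub hx') (hmy.2 x hlt)
            · exact h2 (he ▸ hmy)
        rw [Function.update_self, Function.update_of_ne hxm]
        exact hP2 x hx' y hy (trle_trans h1 hmy) (fun c => h2 (trle_trans hmy c)) hixy
      · have hxm : x ≠ m := (Finset.mem_erase.mp hx').1
        have hzm : z ≠ m := (Finset.mem_erase.mp hz').1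
        rw [Function.update_of_ne hxm, Function.update_of_ne hzm]
        exact hP2 x hx' z hz' h1 h2 hinc
    · intro x hx z hz h1 h2
      rcases hmem x hx with rfl | hx'
      · rcases hmem z hz with rfl | hz'
        · rfl
        · have hzm : z ≠ m := (Finset.mem_erase.mp hz').1
          rw [Function.update_self, Function.update_of_ne hzm]
          exact hP3 y hy z hz' (trle_trans hym h1) (trle_trans h2 hmy)
      rcases hmem z hz with rfl | hz'
      · have hxm : x ≠ m := (Finset.mem_erase.mp hx').1
        rw [Function.update_self, Function.update_of_ne hxm]
        exact hP3 x hx' y hy (trle_trans h1 hmy) (trle_trans hym h2)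
      · have hxm : x ≠ m := (Finset.mem_erase.mp hx').1
        have hzm : z ≠ m := (Finset.mem_erase.mp hz').1
        rw [Function.update_of_ne hxm, Function.update_of_ne hzm]
        exact hP3 x hx' z hz' h1 h2
  · -- m is strictly above everything in t in the trace order
    push_neg at hA
    rcases t.eq_empty_or_nonempty with ht0 | ht
    · -- s = {m}
      refine ⟨fun _ => 0, ?_, ?_, ?_⟩
      · intro x hx z hz hlt
        rcases hmem x hx with rfl | hx'
        · exact absurd hlt (hnotlt z hz)
        · rw [ht0] at hx'; exact absurd hx' (Finset.notMem_empty x)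
      · intro x hx z hz h1 h2 hinc
        rcases hmem x hx with rfl | hx'
        · rcases hmem z hz with rfl | hz'
          · exact absurd h1 h2
          · rw [ht0] at hz'; exact absurd hz' (Finset.notMem_empty z)
        · rw [ht0] at hx'; exact absurd hx' (Finset.notMem_empty x)
      · intros; rfl
    · -- proper extension
      have hcase : ∀ z ∈ t, z < m ∨ incomp z m := by
        intro z hz
        have hzm : z ≠ m := (Finset.mem_erase.mp hz).1
        rcases em (z ≤ m) with h | h
        · exact Or.inl (h.lt_of_ne hzm)
        · refine Or.inr ⟨h, fun hle => ?_⟩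
          rcases hle.lt_or_eq with hlt | he
          · exact hnotlt z (ht_sub hz) hlt
          · exact hzm he.symm
      set l : X → ℝ := fun z => if z < m then f z + 1 else f z with hl_def
      set L : ℝ := t.sup' ht l with hL_def
      set u : X → ℝ := fun z => if z < m then L + 2 else f z + 1 with hu_def
      set U : ℝ := t.inf' ht u with hU_def
      -- key strict separation
      have hsep : ∀ z1 ∈ t, ∀ z2 ∈ t, ¬ z2 < m → l z1 < f z2 + 1 := by
        intro z1 hz1 z2 hz2 hz2m
        have hinc2 : incomp z2 m := (hcase z2 hz2).resolve_left hz2m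
        by_cases h1m : z1 < m
        · -- need f z1 < f z2
          have h21 : ¬ trle z2 z1 := fun c => hinc2.1 (c.2 m h1m).le
          have h12 : trle z1 z2 := (tot z1 z2).resolve_right h21
          have hne : z1 ≠ z2 := fun e => hinc2.1 (e ▸ h1m).le
          have key12 : f z1 < f z2 := by
            rcases em (z1 ≤ z2) with h | h
            · rcases h.lt_or_eq with hlt | he
              · have := hP1 z1 hz1 z2 hz2 hlt
                linarith only [this]
              · exact absurd he hne
            · rcases em (z2 ≤ z1) with h' | h'
              · rcases h'.lt_or_eq with hlt | he
                · exact absurd (lt_imp_trle hlt) h21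
                · exact absurd he.symm hne
              · exact (hP2 z1 hz1 z2 hz2 h12 h21 ⟨h, h'⟩).1
          simp only [hl_def, if_pos h1m]
          linarith only [key12]
        · -- z1 incomp m too; need f z1 < f z2 + 1
          simp only [hl_def, if_neg h1m]
          have goal12 : f z1 < f z2 + 1 := by
            rcases tot z1 z2 with h12 | h21
            · by_cases h21 : trle z2 z1
              · have := hP3 z1 hz1 z2 hz2 h12 h21
                linarith only [this]
              · rcases em (z1 ≤ z2) with h | h
                · rcases h.lt_or_eq with hlt | he
                  · have := hP1 z1 hz1 z2 hz2 hlt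
                    linarith only [this]
                  · rw [he]; linarith only []
                · rcases em (z2 ≤ z1) with h' | h'
                  · rcases h'.lt_or_eq with hlt | he
                    · exact absurd (lt_imp_trle hlt) h21
                    · rw [← he]; linarith only []
                  · have := (hP2 z1 hz1 z2 hz2 h12 h21 ⟨h, h'⟩).1
                    linarith only [this]
            · by_cases h12 : trle z1 z2
              · have := hP3 z1 hz1 z2 hz2 h12 h21
                linarith only [this]
              · -- z2 strictly trace-below z1
                rcases em (z2 ≤ z1) with h | h
                · rcases h.lt_or_eq with hlt | he
                  · exact absurd ((hmax z1 (ht_sub hz1)).1 z2 hlt) hz2m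
                  · rw [he]; linarith only []
                · rcases em (z1 ≤ z2) with h' | h'
                  · rcases h'.lt_or_eq with hlt | he
                    · exact absurd (lt_imp_trle hlt) h12
                    · rw [← he]; linarith only []
                  · have := (hP2 z2 hz2 z1 hz1 h21 h12 ⟨h, h'⟩).2
                    linarith only [this]
          exact goal12
      have hLU : L < U := by
        rw [hU_def, Finset.lt_inf'_iff]
        intro z2 hz2
        rw [hL_def, Finset.sup'_lt_iff]
        intro z1 hz1
        by_cases h2m : z2 < m
        · have h1 : l z1 ≤ L := Finset.le_sup' l hz1
          simp only [hu_def, if_pos h2m]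
          linarith only [h1]
        · simp only [hu_def, if_neg h2m]
          exact hsep z1 hz1 z2 hz2 h2m
      set v : ℝ := (L + U) / 2 with hv_def
      have hvL : L < v := by rw [hv_def]; linarith only [hLU]
      have hvU : v < U := by rw [hv_def]; linarith only [hLU]
      refine ⟨Function.update f m v, ?_, ?_, ?_⟩
      · intro x hx z hz hlt
        rcases hmem x hx with rfl | hx'
        · exact absurd hlt (hnotlt z hz)
        rcases hmem z hz with rfl | hz'
        · have hxm : x ≠ m := (Finset.mem_erase.mp hx').1
          rw [Function.update_self, Function.update_of_ne hxm]
          have h1 : l x ≤ L := Finset.le_sup' l hx'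
          simp only [hl_def, if_pos hlt] at h1
          linarith only [h1, hvL]
        · have hxm : x ≠ m := (Finset.mem_erase.mp hx').1
          have hzm : z ≠ m := (Finset.mem_erase.mp hz').1
          rw [Function.update_of_ne hxm, Function.update_of_ne hzm]
          exact hP1 x hx' z hz' hlt
      · intro x hx z hz h1 h2 hinc
        rcases hmem x hx with rfl | hx'
        · rcases hmem z hz with rfl | hz'
          · exact absurd h1 h2
          · exact absurd h1 (hA z hz')
        rcases hmem z hz with rfl | hz'
        · have hxm : x ≠ m := (Finset.mem_erase.mp hx').1
          rw [Function.update_self, Function.update_of_ne hxm]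
          have hxltm : ¬ x < m := fun c => hinc.1 c.le
          constructor
          · have hb : l x ≤ L := Finset.le_sup' l hx'
            simp only [hl_def, if_neg hxltm] at hb
            linarith only [hb, hvL]
          · have hb : U ≤ u x := Finset.inf'_le u hx'
            simp only [hu_def, if_neg hxltm] at hb
            linarith only [hb, hvU]
        · have hxm : x ≠ m := (Finset.mem_erase.mp hx').1
          have hzm : z ≠ m := (Finset.mem_erase.mp hz').1
          rw [Function.update_of_ne hxm, Function.update_of_ne hzm]
          exact hP2 x hx' z hz' h1 h2 hinc
      · intro x hx z hz h1 h2
        rcases hmem x hx with rfl | hx'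
        · rcases hmem z hz with rfl | hz'
          · rfl
          · exact absurd h1 (hA z hz')
        rcases hmem z hz with rfl | hz'
        · exact absurd h2 (hA x hx')
        · have hxm : x ≠ m := (Finset.mem_erase.mp hx').1
          have hzm : z ≠ m := (Finset.mem_erase.mp hz').1
          rw [Function.update_of_ne hxm, Function.update_of_ne hzm]
          exact hP3 x hx' z hz' h1 h2


lemma incomp_of {a b : X} (h1 : ¬ a < b) (h2 : ¬ b < a) (h3 : a ≠ b) : incomp a b :=
  ⟨fun h => h.lt_or_eq.elim h1 h3, fun h => h.lt_or_eq.elim h2 (fun e => h3 e.symm)⟩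

lemma trle_total
    (hH : ¬ ∃ a b c d : X, a < b ∧ c < d ∧ incomp a c ∧ incomp a d ∧ incomp b c ∧ incomp b d)
    (hL : ¬ ∃ a b c d : X, a < b ∧ b < c ∧ incomp d a ∧ incomp d b ∧ incomp d c)
    (x y : X) : trle x y ∨ trle y x := by
  by_contra h
  push_neg at h
  obtain ⟨hxy, hyx⟩ := h
  rw [trle, not_and_or] at hxy hyx
  push_neg at hxy hyx
  rcases hxy with ⟨a, hax, hay⟩ | ⟨b, hyb, hxb⟩
  · rcases hyx with ⟨c, hcy, hcx⟩ | ⟨d, hxd, hyd⟩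
    · -- 2+2 : a < x, c < y
      refine hH ⟨a, x, c, y, hax, hcy, ?_, ?_, ?_, ?_⟩
      · exact incomp_of (fun h => hay (h.trans hcy)) (fun h => hcx (h.trans hax))
          (fun e => by subst e; exact hay hcy)
      · exact incomp_of hay (fun h => hcx ((hcy.trans h).trans hax))
          (fun e => by subst e; exact hcx (hcy.trans hax))
      · exact incomp_of (fun h => hay (hax.trans (h.trans hcy))) hcx
          (fun e => by subst e; exact hay (hax.trans hcy))
      · exact incomp_of (fun h => hay (hax.trans h)) (fun h => hcx (hcy.trans h))
          (fun e => by subst e; exact hay hax)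
    · -- 3+1 : a < x < d, y incomparable
      refine hL ⟨a, x, d, y, hax, hxd, ?_, ?_, ?_⟩
      · exact incomp_of (fun h => hyd ((h.trans hax).trans hxd)) hay
          (fun e => by subst e; exact hyd (hax.trans hxd))
      · exact incomp_of (fun h => hyd (h.trans hxd)) (fun h => hay (hax.trans h))
          (fun e => by subst e; exact hyd hxd)
      · exact incomp_of hyd (fun h => hay (hax.trans (hxd.trans h)))
          (fun e => by subst e; exact hay (hax.trans hxd))
  · rcases hyx with ⟨c, hcy, hcx⟩ | ⟨d, hxd, hyd⟩
    · -- 3+1 : c < y < b, x incomparable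
      refine hL ⟨c, y, b, x, hcy, hyb, ?_, ?_, ?_⟩
      · exact incomp_of (fun h => hxb ((h.trans hcy).trans hyb)) hcx
          (fun e => by subst e; exact hxb (hcy.trans hyb))
      · exact incomp_of (fun h => hxb (h.trans hyb)) (fun h => hcx (hcy.trans h))
          (fun e => by subst e; exact hxb hyb)
      · exact incomp_of hxb (fun h => hcx (hcy.trans (hyb.trans h)))
          (fun e => by subst e; exact hcx (hcy.trans hyb))
  
    · -- 2+2 : y < b, x < d
      refine hH ⟨y, b, x, d, hyb, hxd, ?_, ?_, ?_, ?_⟩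
      · exact incomp_of (fun h => hyd (h.trans hxd)) (fun h => hxb (h.trans hyb))
          (fun e => by subst e; exact hyd hxd)
      · exact incomp_of hyd (fun h => hxb ((hxd.trans h).trans hyb))
          (fun e => by subst e; exact hxb (hxd.trans hyb))
      · exact incomp_of (fun h => hyd (hyb.trans (h.trans hxd))) hxb
          (fun e => by subst e; exact hyd (hyb.trans hxd))
      · exact incomp_of (fun h => hyd (hyb.trans h)) (fun h => hxb (hxd.trans h))
          (fun e => by subst e; exact hyd hyb)


end ScottSuppes

/-- Scott–Suppes: a finite poset admits a unit-interval (semiorder) representation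
iff it contains no induced 2+2 and no induced 3+1. -/
theorem semiorder_iff_no_two_two_no_three_one (X : Type*) [Fintype X] [PartialOrder X] :
    (∃ f : X → ℝ, ∀ x y : X, x < y ↔ f x + 1 < f y) ↔
    (¬ ∃ a b c d : X, a < b ∧ c < d ∧ incomp a c ∧ incomp a d ∧ incomp b c ∧ incomp b d) ∧
    (¬ ∃ a b c d : X, a < b ∧ b < c ∧ incomp d a ∧ incomp d b ∧ incomp d c) := by
  constructor
  · rintro ⟨f, hf⟩
    have nlt : ∀ u v : X, ¬ u < v → ¬ (f u + 1 < f v) := fun u v h c => h ((hf u v).mpr c)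
    constructor
    · rintro ⟨a, b, c, d, hab, hcd, h1, h2, h3, h4⟩
      have e1 := (hf a b).mp hab
      have e2 := (hf c d).mp hcd
      have e3 := nlt c b (fun h => h3.2 h.le)
      have e4 := nlt a d (fun h => h2.1 h.le)
      linarith only [e1, e2, e3, e4]
    · rintro ⟨a, b, c, d, hab, hbc, h1, h2, h3⟩
      have e1 := (hf a b).mp hab
      have e2 := (hf b c).mp hbc
      have e3 := nlt a d (fun h => h1.2 h.le)
      have e4 := nlt d c (fun h => h3.1 h.le)
      linarith only [e1, e2, e3, e4]
  · rintro ⟨hH, hL⟩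
    have tot := ScottSuppes.trle_total hH hL
    obtain ⟨f, hP1, hP2, hP3⟩ := ScottSuppes.key tot Finset.univ
    refine ⟨f, fun x y => ⟨fun h => hP1 x (Finset.mem_univ x) y (Finset.mem_univ y) h, ?_⟩⟩
    intro h
    by_contra hxy
    rcases em (y < x) with hlt | hlt
    · have := hP1 y (Finset.mem_univ y) x (Finset.mem_univ x) hlt
      linarith only [h, this]
    rcases em (x = y) with he | he
    · rw [he] at h; linarith only [h]
    have hinc : incomp x y := by
      constructor
      · intro hle; exact hxy (hle.lt_of_ne he)
      · intro hle; exact hlt (hle.lt_of_ne (Ne.symm he))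
    rcases tot x y with h1 | h1
    · by_cases h2 : ScottSuppes.trle y x
      · have := hP3 x (Finset.mem_univ x) y (Finset.mem_univ y) h1 h2
        linarith only [h, this]
      · have := hP2 x (Finset.mem_univ x) y (Finset.mem_univ y) h1 h2 hinc
        linarith only [h, this.2]
    · by_cases h2 : ScottSuppes.trle x y
      · have := hP3 x (Finset.mem_univ x) y (Finset.mem_univ y) h2 h1
        linarith only [h, this]
      · have := hP2 y (Finset.mem_univ y) x (Finset.mem_univ x) h1 h2 ⟨hinc.2, hinc.1⟩
        linarith only [h, this.1]
end

section
/- In the poset P on ℕ = {a₁, a₂, …} defined by a_i < a_j iff j > i + 1, for every finite down-set D there are at most two minimal elements of P ∖ D, and every down-set D with |D| = k satisfies D ⊇ {a₁,…,a_{k-1}} (i.e., D equals {a₁,…,a_{k-1}} together with one of a_k, a_{k+1}). -/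
/-- The "ladder" poset on ground set {a₁, a₂, …} (element a_{i+1} represented by the
natural number i): a_i < a_j iff j > i + 1. -/
def ladderLT (i j : ℕ) : Prop := i + 1 < j

/-- D is a down-set of the ladder poset. -/
def ladderDownSet (D : Finset ℕ) : Prop := ∀ x y : ℕ, y ∈ D → ladderLT x y → x ∈ D

/-- x is a minimal element of the complement of D. -/
def ladderMinOfCompl (D : Finset ℕ) (x : ℕ) : Prop :=
  x ∉ D ∧ ∀ y : ℕ, y ∉ D → ¬ ladderLT y x

/-- In the ladder poset, for every finite down-set D there are at most two minimal
elements of the complement; moreover every down-set D of cardinality k contains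
{a₁,…,a_{k-1}}, i.e. D is {a₁,…,a_{k-1}} together with one of a_k, a_{k+1}. -/
theorem ladder_downsets (D : Finset ℕ) (hD : ladderDownSet D) :
    (∀ x y z : ℕ, ladderMinOfCompl D x → ladderMinOfCompl D y → ladderMinOfCompl D z →
      x = y ∨ x = z ∨ y = z) ∧
    (∀ i : ℕ, i + 1 < D.card → i ∈ D) ∧
    (0 < D.card →
      D = Finset.range (D.card - 1) ∪ {D.card - 1} ∨
      D = Finset.range (D.card - 1) ∪ {D.card}) := by
  refine ⟨?_, ?_, ?_⟩
  · intro x y z hx hy hz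
    by_contra h
    push_neg at h
    have h1 := hx.2 y hy.1
    have h2 := hy.2 x hx.1
    have h3 := hx.2 z hz.1
    have h4 := hz.2 x hx.1
    have h5 := hy.2 z hz.1
    have h6 := hz.2 y hy.1
    simp only [ladderLT] at h1 h2 h3 h4 h5 h6
    omega
  · intro i hi
    have hne : D.Nonempty := Finset.card_pos.mp (by omega)
    set M := D.max' hne with hM
    have hMem : M ∈ D := D.max'_mem hne
    have hsub : D ⊆ Finset.range (M + 1) := by
      intro x hx
      exact Finset.mem_range.mpr (Nat.lt_succ_of_le (D.le_max' x hx))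
    have hcard : D.card ≤ M + 1 := by
      have := Finset.card_le_card hsub
      simpa using this
    rcases lt_trichotomy (i + 1) M with h | h | h
    · exact hD i M hMem h
    · have heq : D = Finset.range (M + 1) :=
        Finset.eq_of_subset_of_card_le hsub (by simp; omega)
      rw [heq]; exact Finset.mem_range.mpr (by omega)
    · omega
  · intro hpos
    have hne : D.Nonempty := Finset.card_pos.mp hpos
    set M := D.max' hne with hM
    have hMem : M ∈ D := D.max'_mem hne
    have hsub : D ⊆ Finset.range (M + 1) := by
      intro x hx
      exact Finset.mem_range.mpr (Nat.lt_succ_of_le (D.le_max' x hx))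
    by_cases hc : M - 1 ∈ D
    · left
      have heq : D = Finset.range (M + 1) := by
        apply Finset.Subset.antisymm hsub
        intro x hx
        rw [Finset.mem_range] at hx
        rcases Nat.lt_or_ge (x + 1) M with h | h
        · exact hD x M hMem h
        · have : x = M ∨ x = M - 1 := by omega
          rcases this with h' | h'
          · rw [h']; exact hMem
          · rw [h']; exact hc
      have hcard : D.card = M + 1 := by rw [heq]; simp
      rw [hcard, heq]
      rw [Finset.range_add_one]; ext a; simp [or_comm]
    · right
      have hM1 : 1 ≤ M := by
        rcases Nat.eq_zero_or_pos M with h | h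
        · exfalso; exact hc (by rw [h]; simpa [h] using hMem)
        · exact h
      have heq : D = Finset.range (M - 1) ∪ {M} := by
        apply Finset.Subset.antisymm
        · intro x hx
          have hxle : x ≤ M := D.le_max' x hx
          have hxne : x ≠ M - 1 := fun h => hc (h ▸ hx)
          rcases Nat.eq_or_lt_of_le hxle with h | h
          · exact Finset.mem_union_right _ (by simp [h])
          · exact Finset.mem_union_left _ (Finset.mem_range.mpr (by omega))
        · intro x hx
          rcases Finset.mem_union.mp hx with h | h
          · exact hD x M hMem (by have := Finset.mem_range.mp h; simpa [ladderLT] using by omega)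
          · have : x = M := Finset.mem_singleton.mp h
            rw [this]; exact hMem
      have hcard : D.card = M := by
        rw [heq, Finset.card_union_of_disjoint]
        · simp; omega
        · simp [Finset.disjoint_singleton_right]
      rw [hcard, heq]
end

section
/- If (L₁, L₂) is a pair of linear orders on a finite set and {a,b} is a swappable pair (a and b are consecutive in both L₁ and L₂, with a before b in L₁ and b before a in L₂), then the pair of linear orders (L₁', L₂') obtained by transposing a and b in both orders satisfies L₁' ∩ L₂' = L₁ ∩ L₂; i.e., swapping a swappable pair does not change the intersection partial order. -/
/-- Swapping a swappable pair {a,b} (consecutive in both linear orders, with a before b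
in L₁ and b before a in L₂) in both orders does not change the intersection partial
order of the two linear orders. -/
theorem swap_swappable_pair_preserves_intersection
    {S : Type*} [Fintype S] [DecidableEq S] {n : ℕ}
    (L₁ L₂ : S ≃ Fin n) (a b : S) (hab : a ≠ b)
    (h₁ : (L₁ a : ℕ) + 1 = (L₁ b : ℕ)) (h₂ : (L₂ b : ℕ) + 1 = (L₂ a : ℕ)) :
    ∀ x y : S,
      (((Equiv.swap a b).trans L₁) x < ((Equiv.swap a b).trans L₁) y ∧
        ((Equiv.swap a b).trans L₂) x < ((Equiv.swap a b).trans L₂) y) ↔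
      (L₁ x < L₁ y ∧ L₂ x < L₂ y) := by
  have ne : ∀ (L : S ≃ Fin n) (u v : S), u ≠ v → (L u : ℕ) ≠ (L v : ℕ) :=
    fun L u v h h' => h (L.injective (Fin.val_injective h'))
  intro x y
  simp only [Equiv.trans_apply]
  by_cases hxa : x = a
  · subst hxa
    by_cases hya : y = x
    · subst hya; simp
    by_cases hyb : y = b
    · subst hyb
      simp only [Equiv.swap_apply_left, Equiv.swap_apply_right, Fin.lt_def]
      omega
    · simp only [Equiv.swap_apply_left, Equiv.swap_apply_of_ne_of_ne hya hyb, Fin.lt_def]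
      have := ne L₁ y x hya; have := ne L₁ y b hyb
      have := ne L₂ y x hya; have := ne L₂ y b hyb
      omega
  · by_cases hxb : x = b
    · subst hxb
      by_cases hya : y = a
      · subst hya
        simp only [Equiv.swap_apply_left, Equiv.swap_apply_right, Fin.lt_def]
        omega
      by_cases hyb : y = x
      · subst hyb; simp
      · simp only [Equiv.swap_apply_right, Equiv.swap_apply_of_ne_of_ne hya hyb, Fin.lt_def]
        have := ne L₁ y a hya; have := ne L₁ y x hyb
        have := ne L₂ y a hya; have := ne L₂ y x hyb
        omega
    · by_cases hya : y = a
      · subst hya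
        simp only [Equiv.swap_apply_left, Equiv.swap_apply_of_ne_of_ne hxa hxb, Fin.lt_def]
        have := ne L₁ x y hxa; have := ne L₁ x b hxb
        have := ne L₂ x y hxa; have := ne L₂ x b hxb
        omega
      by_cases hyb : y = b
      · subst hyb
        simp only [Equiv.swap_apply_right, Equiv.swap_apply_of_ne_of_ne hxa hxb, Fin.lt_def]
        have := ne L₁ x a hxa; have := ne L₁ x y hxb
        have := ne L₂ x a hxa; have := ne L₂ x y hxb
        omega
      · simp [Equiv.swap_apply_of_ne_of_ne hxa hxb, Equiv.swap_apply_of_ne_of_ne hya hyb]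
end
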